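/- arXiv:1705.00918 — 8 statements merged into one kernel-verified Lean document; each statement's English description precedes it below -/
import Mathlib

section
/- (Proposition 1) Let Δ, v, w, P, t be positive reals, define E_min := (P/(Δ(v+w))) · ∫₀^Δ max(w·t − x, 0) dx and R_sup(t) := 1 − E_min/(t·P·w/(v+w)). Then R_sup(t) ≤ max(1 − w·t/(2Δ), Δ/(2·w·t)). -/
/-! With `a = w t`, the ratio `E_min / (t P w / (v + w))` equals `(∫₀^Δ (a - x)⁺ dx) / (a Δ)`,
and the integral is `a Δ - Δ² / 2` when `Δ ≤ a` and `a² / 2` when `a ≤ Δ`. So `R_sup(t)` is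
exactly `Δ / (2 w t)` in the first case and exactly `1 - w t / (2 Δ)` in the second. -/

open MeasureTheory

lemma integral_max_sub_zero_of_le {a b : ℝ} (hb : 0 ≤ b) (hba : b ≤ a) :
    ∫ x in (0 : ℝ)..b, max (a - x) 0 = a * b - b ^ 2 / 2 := by
  have h_eq : ∫ x in (0 : ℝ)..b, max (a - x) 0 = ∫ x in (0 : ℝ)..b, (a - x) := by
    refine intervalIntegral.integral_congr fun x hx => max_eq_left ?_
    rw [Set.uIcc_of_le hb] at hx
    linarith [hx.2]
  rw [h_eq, intervalIntegral.integral_sub intervalIntegrable_const intervalIntegral.intervalIntegrable_id,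
    intervalIntegral.integral_const, integral_id]
  simp only [sub_zero, smul_eq_mul]
  ring

lemma integral_max_sub_zero_of_ge {a b : ℝ} (ha : 0 ≤ a) (hab : a ≤ b) :
    ∫ x in (0 : ℝ)..b, max (a - x) 0 = a ^ 2 / 2 := by
  have h_cont : Continuous fun x : ℝ => max (a - x) 0 := by fun_prop
  have h_tail : ∫ x in a..b, max (a - x) 0 = 0 := by
    rw [intervalIntegral.integral_congr (g := fun _ => (0 : ℝ)) fun x hx => max_eq_right ?_]
    · simp
    · rw [Set.uIcc_of_le hab] at hx
      linarith [hx.1]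
  rw [← intervalIntegral.integral_add_adjacent_intervals (h_cont.intervalIntegrable 0 a)
    (h_cont.intervalIntegrable a b), h_tail, integral_max_sub_zero_of_le ha le_rfl]
  ring

theorem stmt_3 (Δ v w P t : ℝ) (hΔ : 0 < Δ) (hv : 0 < v) (hw : 0 < w)
    (hP : 0 < P) (ht : 0 < t)
    (Emin : ℝ) (hEmin : Emin = P / (Δ * (v + w)) * ∫ x in (0:ℝ)..Δ, max (w * t - x) 0)
    (Rsup : ℝ) (hRsup : Rsup = 1 - Emin / (t * P * w / (v + w))) :
    Rsup ≤ max (1 - w * t / (2 * Δ)) (Δ / (2 * w * t)) := by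
  have hwt : 0 < w * t := mul_pos hw ht
  have hvw : 0 < v + w := by linarith
  have h_ratio : Rsup = 1 - (∫ x in (0:ℝ)..Δ, max (w * t - x) 0) / (w * t * Δ) := by
    rw [hRsup, hEmin]
    field_simp
  rcases le_total Δ (w * t) with h | h
  · have h_eq : Rsup = Δ / (2 * w * t) := by
      rw [h_ratio, integral_max_sub_zero_of_le hΔ.le h]
      field_simp
      ring
    exact h_eq ▸ le_max_right _ _
  · have h_eq : Rsup = 1 - w * t / (2 * Δ) := by
      rw [h_ratio, integral_max_sub_zero_of_ge hwt.le h]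
      field_simp
    exact h_eq ▸ le_max_left _ _
end

section
/- Define t_red(y) := min(y·v/w, max(Δ/v − y, 0)). For every t ≥ 0, the Lebesgue measure of the set {y ∈ [0, Δ/v + Δ/w] : t_red(y) > t} equals (1 + w/v) · max(Δ/(v+w) − t, 0). -/
open MeasureTheory

theorem stmt_5 (Δ v w : ℝ) (hΔ : 0 < Δ) (hv : 0 < v) (hw : 0 < w)
    (tred : ℝ → ℝ) (htred : ∀ y, tred y = min (y * v / w) (max (Δ / v - y) 0))
    (t : ℝ) (ht : 0 ≤ t) :
    volume {y ∈ Set.Icc (0:ℝ) (Δ / v + Δ / w) | tred y > t} =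
      ENNReal.ofReal ((1 + w / v) * max (Δ / (v + w) - t) 0) := by
  have hvw : 0 < v + w := by linarith
  have hset : {y ∈ Set.Icc (0:ℝ) (Δ / v + Δ / w) | tred y > t} =
      Set.Ioo (t * w / v) (Δ / v - t) := by
    ext y
    simp only [Set.mem_setOf_eq, Set.mem_Icc, Set.mem_Ioo, htred, gt_iff_lt, lt_min_iff,
      lt_max_iff]
    constructor
    · rintro ⟨⟨h0, h1⟩, h2, h3⟩
      rcases h3 with h | h
      · exact ⟨(div_lt_iff₀ hv).mpr ((lt_div_iff₀ hw).mp h2), by linarith⟩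
      · linarith
    · rintro ⟨h1, h2⟩
      have ha : 0 ≤ t * w / v := by positivity
      have hb : 0 ≤ Δ / w := by positivity
      exact ⟨⟨by linarith, by linarith⟩, (lt_div_iff₀ hw).mpr ((div_lt_iff₀ hv).mp h1),
        Or.inl (by linarith)⟩
  rw [hset, Real.volume_Ioo]
  rcases le_or_gt (Δ / (v + w)) t with h | h
  · rw [max_eq_right (by linarith)]
    rw [mul_zero, ENNReal.ofReal_zero, ENNReal.ofReal_eq_zero]
    rw [div_le_iff₀ hvw] at h
    rw [sub_nonpos, sub_le_iff_le_add, div_le_iff₀ hv]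
    have : t * w / v * v = t * w := div_mul_cancel₀ _ (ne_of_gt hv)
    nlinarith
  · rw [max_eq_left (by linarith)]
    congr 1
    field_simp
    ring
end

section
/- (Proposition 2) Define t_red(y) := min(y·v/w, max(Δ/v − y, 0)) and let μ be the uniform probability measure on [0, Δ/v + Δ/w]. For every t ≥ 0, μ({y : t_red(y) > t}) = (w/(v+w)) · max(1 − t·(v+w)/Δ, 0); consequently, the relative power reduction achievable by the IndivRed mechanism over a duration t, namely μ({y : t_red(y) > t}) divided by the steady-state ON fraction w/(v+w), equals max(1 − t·(v+w)/Δ, 0). -/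
open MeasureTheory

theorem stmt_6 (Δ v w : ℝ) (hΔ : 0 < Δ) (hv : 0 < v) (hw : 0 < w)
    (tred : ℝ → ℝ) (htred : ∀ y, tred y = min (y * v / w) (max (Δ / v - y) 0))
    (μ : Measure ℝ)
    (hμ : μ = (ENNReal.ofReal (Δ / v + Δ / w))⁻¹ •
      volume.restrict (Set.Icc (0:ℝ) (Δ / v + Δ / w)))
    (t : ℝ) (ht : 0 ≤ t) :
    μ {y | tred y > t} =
      ENNReal.ofReal (w / (v + w) * max (1 - t * (v + w) / Δ) 0) ∧
    (μ {y | tred y > t}).toReal / (w / (v + w)) = max (1 - t * (v + w) / Δ) 0 := by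
  set L : ℝ := Δ / v + Δ / w with hL
  have hLpos : 0 < L := by positivity
  have hvw : 0 < v + w := by linarith
  -- The set is the open interval (t*w/v, Δ/v - t)
  have hset : {y | tred y > t} = Set.Ioo (t * w / v) (Δ / v - t) := by
    ext y
    simp only [Set.mem_setOf_eq, htred, gt_iff_lt, lt_min_iff, Set.mem_Ioo, lt_max_iff]
    constructor
    · rintro ⟨h1, h2⟩
      constructor
      · rw [div_lt_iff₀ hv]
        rw [lt_div_iff₀ hw] at h1
        linarith
      · rcases h2 with h | h
        · linarith
        · linarith
    · rintro ⟨h1, h2⟩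
      refine ⟨?_, Or.inl (by linarith)⟩
      rw [lt_div_iff₀ hw]
      rw [div_lt_iff₀ hv] at h1
      linarith
  have hsub : Set.Ioo (t * w / v) (Δ / v - t) ⊆ Set.Icc (0:ℝ) L := by
    rintro y ⟨h1, h2⟩
    have h0 : (0:ℝ) ≤ t * w / v := by positivity
    have hb : Δ / v - t ≤ L := by
      have : 0 ≤ Δ / w := by positivity
      simp only [hL]; linarith
    exact ⟨le_of_lt (lt_of_le_of_lt h0 h1), le_trans h2.le hb⟩
  have hmeas : μ {y | tred y > t} =
      (ENNReal.ofReal L)⁻¹ * ENNReal.ofReal (Δ / v - t - t * w / v) := by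
    rw [hset, hμ]
    rw [Measure.smul_apply, Measure.restrict_apply measurableSet_Ioo,
      Set.inter_eq_self_of_subset_left hsub, Real.volume_Ioo, smul_eq_mul]
  -- real-valued computation
  have key : Δ / v - t - t * w / v = L * (w / (v + w) * (1 - t * (v + w) / Δ)) := by
    rw [hL]
    field_simp
    ring
  have hRHS : (ENNReal.ofReal L)⁻¹ * ENNReal.ofReal (Δ / v - t - t * w / v) =
      ENNReal.ofReal (w / (v + w) * max (1 - t * (v + w) / Δ) 0) := by
    have hc : 0 < w / (v + w) := by positivity
    rcases le_or_gt (1 - t * (v + w) / Δ) 0 with h | h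
    · have h1 : Δ / v - t - t * w / v ≤ 0 := by
        rw [key]
        exact mul_nonpos_of_nonneg_of_nonpos hLpos.le
          (mul_nonpos_of_nonneg_of_nonpos hc.le h)
      rw [ENNReal.ofReal_eq_zero.mpr h1, mul_zero, max_eq_right h, mul_zero,
        ENNReal.ofReal_zero]
    · rw [max_eq_left h.le, key, ENNReal.ofReal_mul hLpos.le, ← mul_assoc,
        ENNReal.inv_mul_cancel (by simpa using hLpos)
          (by exact ENNReal.ofReal_ne_top), one_mul]
  have h1 : μ {y | tred y > t} =
      ENNReal.ofReal (w / (v + w) * max (1 - t * (v + w) / Δ) 0) := by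
    rw [hmeas, hRHS]
  refine ⟨h1, ?_⟩
  rw [h1, ENNReal.toReal_ofReal (by positivity)]
  rw [mul_comm, mul_div_assoc, div_self (by positivity), mul_one]
end

section
/- Let Δ, v, w, t be positive reals with t·(v + w)² ≤ Δ·(v + 2w), and let t̃ be a real with t̃ ≥ w·t/(v + 2w). Then t̃ ≥ (1/2)·(t − Δ/(w + w²/v)). -/
/-!
Since `w + w²/v = w(v+w)/v`, the claim follows from `2t̃ ≥ 2wt/(v+2w) = t - vt/(v+2w)` once
`vt/(v+2w) ≤ Δv/(w(v+w))`, i.e. `t·w(v+w) ≤ Δ(v+2w)`; and this is the feasibility condition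
weakened through `w(v+w) ≤ (v+w)²`.
-/

section

variable {Δ v w t : ℝ}

lemma add_sq_div_eq_mul_add_div (hv : v ≠ 0) : w + w ^ 2 / v = w * (v + w) / v := by
  field_simp

lemma sub_two_mul_div_eq_mul_div (h : v + 2 * w ≠ 0) :
    t - 2 * (w * t / (v + 2 * w)) = v * t / (v + 2 * w) := by
  field_simp
  ring

lemma mul_mul_add_le_of_mul_add_sq_le (ht : 0 ≤ t) (hv : 0 ≤ v) (hw : 0 ≤ w)
    (hfeas : t * (v + w) ^ 2 ≤ Δ * (v + 2 * w)) :
    t * (w * (v + w)) ≤ Δ * (v + 2 * w) := by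
  have hw_le : w * (v + w) ≤ (v + w) ^ 2 := by nlinarith [mul_nonneg hv (add_nonneg hv hw)]
  calc t * (w * (v + w)) ≤ t * (v + w) ^ 2 := mul_le_mul_of_nonneg_left hw_le ht
    _ ≤ Δ * (v + 2 * w) := hfeas

lemma mul_div_le_div_add_sq_div (hv : 0 < v) (hw : 0 < w)
    (h : t * (w * (v + w)) ≤ Δ * (v + 2 * w)) :
    v * t / (v + 2 * w) ≤ Δ / (w + w ^ 2 / v) := by
  rw [add_sq_div_eq_mul_add_div hv.ne', div_div_eq_mul_div,
    div_le_div_iff₀ (by positivity) (by positivity)]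
  linear_combination v * h

end

theorem stmt_12_general (Δ v w t : ℝ) (hv : 0 < v) (hw : 0 < w) (ht : 0 < t)
    (hfeas : t * (v + w) ^ 2 ≤ Δ * (v + 2 * w))
    (ttilde : ℝ) (httilde : ttilde ≥ w * t / (v + 2 * w)) :
    ttilde ≥ (1 / 2) * (t - Δ / (w + w ^ 2 / v)) := by
  have hsep := mul_div_le_div_add_sq_div hv hw
    (mul_mul_add_le_of_mul_add_sq_le ht.le hv.le hw.le hfeas)
  have hsplit := sub_two_mul_div_eq_mul_div (t := t) (by positivity : v + 2 * w ≠ 0)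
  linarith

theorem stmt_12 (Δ v w t : ℝ) (hΔ : 0 < Δ) (hv : 0 < v) (hw : 0 < w) (ht : 0 < t)
    (hfeas : t * (v + w) ^ 2 ≤ Δ * (v + 2 * w))
    (ttilde : ℝ) (httilde : ttilde ≥ w * t / (v + 2 * w)) :
    ttilde ≥ (1 / 2) * (t - Δ / (w + w ^ 2 / v)) :=
  stmt_12_general Δ v w t hv hw ht hfeas ttilde httilde
end

section
/- Let Δ, v, w, t be positive reals. Define, for t̃ ∈ ℝ, y₁(t̃) := t̃·w/v, y₂(t̃) := Δ/v − t̃, y₃(t̃) := Δ/v + Δ/w + t̃·w/v − (1 + w/v)·(t − t̃), and let S be the set of t̃ ∈ [0, t] such that: y₃(t̃) ≥ y₂(t̃); y₃(t̃) ≥ Δ/v + Δ/w − t; y₁(t̃) ≤ Δ/v − t; and for all x ∈ [0, t − t̃], t − t̃ − x ≤ (v/w)·(t̃ + y₁(t̃) − x·w/v). Then S is nonempty if and only if t ≤ Δ·(v + 2w)/(v + w)². -/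
/-!
After clearing denominators the four constraints on `t̃` become linear:
`y₃ ≥ y₂` reads `w (v + w) (t - 2 t̃) ≤ Δ v`, the second and fourth both read `w t ≤ t̃ (v + 2w)`
(the fourth does not depend on `x`), and the third reads `t̃ w ≤ Δ - t v`.
The second and third pinch `t̃` between `w t / (v + 2w)` and `(Δ - t v) / w`, which is possible
exactly when `t (v + w)² ≤ Δ (v + 2w)`; the lower end `t̃ = w t / (v + 2w)` is then feasible.
-/

namespace CoordRed

variable {Δ v w t s : ℝ}

lemma y₂_le_y₃_iff (hv : 0 < v) (hw : 0 < w) :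
    Δ / v - s ≤ Δ / v + Δ / w + s * w / v - (1 + w / v) * (t - s) ↔
      w * (v + w) * (t - 2 * s) ≤ Δ * v := by
  rw [← sub_nonneg, ← sub_nonneg (b := w * (v + w) * (t - 2 * s))]
  have hexpand : Δ / v + Δ / w + s * w / v - (1 + w / v) * (t - s) - (Δ / v - s) =
      (Δ * v - w * (v + w) * (t - 2 * s)) / (v * w) := by
    field_simp
    ring
  rw [hexpand, le_div_iff₀ (by positivity), zero_mul]

lemma sub_le_y₃_iff (hv : 0 < v) :
    Δ / v + Δ / w - t ≤ Δ / v + Δ / w + s * w / v - (1 + w / v) * (t - s) ↔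
      w * t ≤ s * (v + 2 * w) := by
  rw [← sub_nonneg, ← sub_nonneg (b := w * t)]
  have hexpand : Δ / v + Δ / w + s * w / v - (1 + w / v) * (t - s) - (Δ / v + Δ / w - t) =
      (s * (v + 2 * w) - w * t) / v := by
    field_simp
    ring
  rw [hexpand, le_div_iff₀ hv, zero_mul]

lemma y₁_le_iff (hv : 0 < v) : s * w / v ≤ Δ / v - t ↔ s * w ≤ Δ - t * v := by
  have hrhs : Δ / v - t = (Δ - t * v) / v := by field_simp
  rw [hrhs, div_le_div_iff_of_pos_right hv]

lemma sub_le_cycle_iff (hv : 0 < v) (hw : 0 < w) (x : ℝ) :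
    t - s - x ≤ v / w * (s + s * w / v - x * w / v) ↔ w * t ≤ s * (v + 2 * w) := by
  have hexpand : v / w * (s + s * w / v - x * w / v) = s * (v + w) / w - x := by
    field_simp
  rw [hexpand, sub_le_sub_iff_right, le_div_iff₀ hw]
  constructor <;> intro h <;> linarith

lemma mul_sq_le_of_feasible (hv : 0 < v) (hw : 0 < w)
    (hlower : w * t ≤ s * (v + 2 * w)) (hupper : s * w ≤ Δ - t * v) :
    t * (v + w) ^ 2 ≤ Δ * (v + 2 * w) := by
  have hvw : 0 ≤ v + 2 * w := by positivity
  have : w * (w * t) ≤ (Δ - t * v) * (v + 2 * w) :=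
    calc w * (w * t) ≤ w * (s * (v + 2 * w)) := mul_le_mul_of_nonneg_left hlower hw.le
      _ = s * w * (v + 2 * w) := by ring
      _ ≤ (Δ - t * v) * (v + 2 * w) := mul_le_mul_of_nonneg_right hupper hvw
  linear_combination this

end CoordRed

theorem stmt_13_general (Δ v w t : ℝ) (hv : 0 < v) (hw : 0 < w) (ht : 0 < t)
    (y₁ y₂ y₃ : ℝ → ℝ)
    (hy₁ : ∀ ttilde, y₁ ttilde = ttilde * w / v)
    (hy₂ : ∀ ttilde, y₂ ttilde = Δ / v - ttilde)
    (hy₃ : ∀ ttilde, y₃ ttilde =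
      Δ / v + Δ / w + ttilde * w / v - (1 + w / v) * (t - ttilde))
    (S : Set ℝ)
    (hS : S = {ttilde ∈ Set.Icc (0:ℝ) t |
      y₃ ttilde ≥ y₂ ttilde ∧
      y₃ ttilde ≥ Δ / v + Δ / w - t ∧
      y₁ ttilde ≤ Δ / v - t ∧
      ∀ x ∈ Set.Icc (0:ℝ) (t - ttilde),
        t - ttilde - x ≤ v / w * (ttilde + y₁ ttilde - x * w / v)}) :
    S.Nonempty ↔ t ≤ Δ * (v + 2 * w) / (v + w) ^ 2 := by
  subst hS
  simp only [hy₁, hy₂, hy₃, ge_iff_le, CoordRed.y₂_le_y₃_iff hv hw, CoordRed.sub_le_y₃_iff hv,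
    CoordRed.y₁_le_iff hv, CoordRed.sub_le_cycle_iff hv hw]
  rw [le_div_iff₀ (by positivity)]
  constructor
  · rintro ⟨s, -, -, hlower, hupper, -⟩
    exact CoordRed.mul_sq_le_of_feasible hv hw hlower hupper
  · intro hbound
    have hvw : 0 < v + 2 * w := by positivity
    have hlower : w * t ≤ t * w / (v + 2 * w) * (v + 2 * w) := by
      rw [div_mul_cancel₀ _ hvw.ne', mul_comm]
    refine ⟨t * w / (v + 2 * w), ⟨by positivity, ?_⟩, ?_, hlower, ?_, fun _ _ => hlower⟩
    · rw [div_le_iff₀ hvw]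
      nlinarith
    · have hgap : t - 2 * (t * w / (v + 2 * w)) = t * v / (v + 2 * w) := by
        field_simp
        ring
      rw [hgap, mul_div_assoc', div_le_iff₀ hvw]
      have hcross : t * w * (v + w) ≤ t * (v + w) ^ 2 := by
        nlinarith [mul_pos (mul_pos ht hv) (add_pos hv hw)]
      nlinarith [mul_le_mul_of_nonneg_left (hcross.trans hbound) hv.le]
    · rw [div_mul_eq_mul_div, div_le_iff₀ hvw]
      nlinarith

theorem stmt_13 (Δ v w t : ℝ) (hΔ : 0 < Δ) (hv : 0 < v) (hw : 0 < w) (ht : 0 < t)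
    (y₁ y₂ y₃ : ℝ → ℝ)
    (hy₁ : ∀ ttilde, y₁ ttilde = ttilde * w / v)
    (hy₂ : ∀ ttilde, y₂ ttilde = Δ / v - ttilde)
    (hy₃ : ∀ ttilde, y₃ ttilde =
      Δ / v + Δ / w + ttilde * w / v - (1 + w / v) * (t - ttilde))
    (S : Set ℝ)
    (hS : S = {ttilde ∈ Set.Icc (0:ℝ) t |
      y₃ ttilde ≥ y₂ ttilde ∧
      y₃ ttilde ≥ Δ / v + Δ / w - t ∧
      y₁ ttilde ≤ Δ / v - t ∧
      ∀ x ∈ Set.Icc (0:ℝ) (t - ttilde),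
        t - ttilde - x ≤ v / w * (ttilde + y₁ ttilde - x * w / v)}) :
    S.Nonempty ↔ t ≤ Δ * (v + 2 * w) / (v + w) ^ 2 :=
  stmt_13_general Δ v w t hv hw ht y₁ y₂ y₃ hy₁ hy₂ hy₃ S hS
end

section
/- (Proposition 3) Let Δ, v, w, t be positive reals with t ≤ Δ·(v + 2w)/(v + w)². Define, for t̃ ∈ ℝ, y₁(t̃) := t̃·w/v, y₂(t̃) := Δ/v − t̃, y₃(t̃) := Δ/v + Δ/w + t̃·w/v − (1 + w/v)·(t − t̃), and let S be the set of t̃ ∈ [0, t] such that: y₃(t̃) ≥ y₂(t̃); y₃(t̃) ≥ Δ/v + Δ/w − t; y₁(t̃) ≤ Δ/v − t; and for all x ∈ [0, t − t̃], t − t̃ − x ≤ (v/w)·(t̃ + y₁(t̃) − x·w/v). Then t̃* := w·t/(v + 2w) is the minimum of S, and the corresponding relative power reduction (y₂(t̃*) − y₁(t̃*))/(Δ/v) = 1 − (v + w)·t̃*/Δ equals 1 − t·((v + w)/(v + 2w))·(w/Δ). -/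
/-!
Multiplied by `v`, the second constraint `y₃ t̃ ≥ Δ/v + Δ/w - t` reads `t̃ (v + 2w) ≥ w t`, so every
feasible `t̃` is at least `t̃* := w t / (v + 2w)`. Conversely `t̃*` is feasible: the second constraint
holds with equality, the fourth is an identity in `x` because `t - t̃* = t̃* (v + w) / w`, and the
first and third both reduce to the hypothesis `t (v + w)² ≤ Δ (v + 2w)`.
-/

namespace CoordRed

/-- The feasible set `S` of the CoordRed mechanism, with `y₁`, `y₂`, `y₃` unfolded. -/
def feasibleSet (Δ v w t : ℝ) : Set ℝ :=
  {s ∈ Set.Icc (0:ℝ) t |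
    Δ / v + Δ / w + s * w / v - (1 + w / v) * (t - s) ≥ Δ / v - s ∧
    Δ / v + Δ / w + s * w / v - (1 + w / v) * (t - s) ≥ Δ / v + Δ / w - t ∧
    s * w / v ≤ Δ / v - t ∧
    ∀ x ∈ Set.Icc (0:ℝ) (t - s), t - s - x ≤ v / w * (s + s * w / v - x * w / v)}

variable {Δ v w t : ℝ}

theorem y₃_ge_iff_optimal_le (hv : 0 < v) (hw : 0 < w) (s : ℝ) :
    Δ / v + Δ / w - t ≤ Δ / v + Δ / w + s * w / v - (1 + w / v) * (t - s) ↔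
      w * t / (v + 2 * w) ≤ s := by
  have key : Δ / v + Δ / w + s * w / v - (1 + w / v) * (t - s) - (Δ / v + Δ / w - t) =
      (s * (v + 2 * w) - w * t) / v := by
    field_simp
    ring
  rw [← sub_nonneg, key, le_div_iff₀ hv, zero_mul, sub_nonneg, div_le_iff₀ (by positivity)]

theorem optimal_mem_feasibleSet (hv : 0 < v) (hw : 0 < w) (ht : 0 < t)
    (hfeas : t ≤ Δ * (v + 2 * w) / (v + w) ^ 2) :
    w * t / (v + 2 * w) ∈ feasibleSet Δ v w t := by
  have hsum : 0 < v + 2 * w := by positivity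
  rw [le_div_iff₀ (by positivity)] at hfeas
  obtain ⟨s, hs⟩ : ∃ s, s = w * t / (v + 2 * w) := ⟨_, rfl⟩
  rw [← hs]
  have hs_mul : s * (v + 2 * w) = w * t := by rw [hs]; field_simp
  have hlow : Δ / v + Δ / w + s * w / v - (1 + w / v) * (t - s) = Δ / v + Δ / w - t := by
    field_simp
    linear_combination w * hs_mul
  refine ⟨⟨by rw [hs]; positivity, ?_⟩, ?_, hlow.ge, ?_, fun x _ => ?_⟩
  · nlinarith
  · have hgap : (t - s) * w ≤ Δ := by nlinarith [mul_pos (mul_pos ht hv) (add_pos hv hw)]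
    rw [hlow, ge_iff_le]
    linarith [(le_div_iff₀ hw).2 hgap]
  · rw [le_sub_iff_add_le, div_add' _ _ _ hv.ne', div_le_div_iff_of_pos_right hv]
    nlinarith
  · apply le_of_eq
    field_simp
    linear_combination -hs_mul

theorem isLeast_feasibleSet (hv : 0 < v) (hw : 0 < w) (ht : 0 < t)
    (hfeas : t ≤ Δ * (v + 2 * w) / (v + w) ^ 2) :
    IsLeast (feasibleSet Δ v w t) (w * t / (v + 2 * w)) :=
  ⟨optimal_mem_feasibleSet hv hw ht hfeas,
    fun s hs => (y₃_ge_iff_optimal_le hv hw s).1 hs.2.2.1⟩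

theorem relativeReduction_eq (hΔ : Δ ≠ 0) (hv : v ≠ 0) (s : ℝ) :
    (Δ / v - s - s * w / v) / (Δ / v) = 1 - (v + w) * s / Δ := by
  field_simp
  ring

end CoordRed

open CoordRed in
theorem stmt_14 (Δ v w t : ℝ) (hΔ : 0 < Δ) (hv : 0 < v) (hw : 0 < w) (ht : 0 < t)
    (hfeas : t ≤ Δ * (v + 2 * w) / (v + w) ^ 2)
    (y₁ y₂ y₃ : ℝ → ℝ)
    (hy₁ : ∀ ttilde, y₁ ttilde = ttilde * w / v)
    (hy₂ : ∀ ttilde, y₂ ttilde = Δ / v - ttilde)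
    (hy₃ : ∀ ttilde, y₃ ttilde =
      Δ / v + Δ / w + ttilde * w / v - (1 + w / v) * (t - ttilde))
    (S : Set ℝ)
    (hS : S = {ttilde ∈ Set.Icc (0:ℝ) t |
      y₃ ttilde ≥ y₂ ttilde ∧
      y₃ ttilde ≥ Δ / v + Δ / w - t ∧
      y₁ ttilde ≤ Δ / v - t ∧
      ∀ x ∈ Set.Icc (0:ℝ) (t - ttilde),
        t - ttilde - x ≤ v / w * (ttilde + y₁ ttilde - x * w / v)}) :
    IsLeast S (w * t / (v + 2 * w)) ∧
    (y₂ (w * t / (v + 2 * w)) - y₁ (w * t / (v + 2 * w))) / (Δ / v) =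
      1 - (v + w) * (w * t / (v + 2 * w)) / Δ ∧
    1 - (v + w) * (w * t / (v + 2 * w)) / Δ =
      1 - t * ((v + w) / (v + 2 * w)) * (w / Δ) := by
  obtain rfl : y₁ = fun s => s * w / v := funext hy₁
  obtain rfl : y₂ = fun s => Δ / v - s := funext hy₂
  obtain rfl : y₃ = fun s => Δ / v + Δ / w + s * w / v - (1 + w / v) * (t - s) := funext hy₃
  subst hS
  exact ⟨isLeast_feasibleSet hv hw ht hfeas, relativeReduction_eq hΔ.ne' hv.ne' _, by ring⟩
end

section
/- Let Δ, v, w be positive reals. Then: (i) for every t with 0 ≤ t ≤ Δ/(v + w), one has 1 − t·((v + w)/(v + 2w))·(w/Δ) ≥ 1 − t·(v + w)/Δ; (ii) Δ·(v + 2w)/(v + w)² > Δ/(v + w); and (iii) evaluating the CoordRed reduction formula at its maximal duration gives 1 − (Δ·(v + 2w)/(v + w)²)·((v + w)/(v + 2w))·(w/Δ) = v/(v + w) > 0. -/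
/-!
The CoordRed reduction rate `((v + w) / (v + 2w)) · (w / Δ)` is the IndivRed rate `(v + w) / Δ`
scaled by `w / (v + 2w) < 1`, so CoordRed loses amplitude more slowly; its maximal duration is
IndivRed's scaled by `(v + 2w) / (v + w) > 1`; and at that duration the lost fraction is exactly
`w / (v + w)`, leaving `v / (v + w)`.
-/

lemma coordRate_le_indivRate {Δ v w : ℝ} (hΔ : 0 ≤ Δ) (hv : 0 ≤ v) (hw : 0 ≤ w) :
    (v + w) / (v + 2 * w) * (w / Δ) ≤ (v + w) / Δ :=
  calc (v + w) / (v + 2 * w) * (w / Δ) ≤ 1 * (w / Δ) := by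
        gcongr
        exact div_le_one_of_le₀ (by linarith) (by linarith)
    _ ≤ (v + w) / Δ := by rw [one_mul]; gcongr; linarith

lemma div_lt_mul_div_sq {Δ v w : ℝ} (hΔ : 0 < Δ) (hv : 0 ≤ v) (hw : 0 < w) :
    Δ / (v + w) < Δ * (v + 2 * w) / (v + w) ^ 2 :=
  have hvw : v + w ≠ 0 := by positivity
  calc Δ / (v + w) = Δ * (v + w) / (v + w) ^ 2 := by field_simp
    _ < Δ * (v + 2 * w) / (v + w) ^ 2 := by gcongr; linarith

lemma one_sub_coordRate_mul_maxDuration {Δ v w : ℝ} (hΔ : Δ ≠ 0) (hvw : v + w ≠ 0)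
    (hvw₂ : v + 2 * w ≠ 0) :
    1 - Δ * (v + 2 * w) / (v + w) ^ 2 * ((v + w) / (v + 2 * w)) * (w / Δ) = v / (v + w) := by
  field_simp
  ring

theorem stmt_15 (Δ v w : ℝ) (hΔ : 0 < Δ) (hv : 0 < v) (hw : 0 < w) :
    (∀ t : ℝ, 0 ≤ t → t ≤ Δ / (v + w) →
      1 - t * ((v + w) / (v + 2 * w)) * (w / Δ) ≥ 1 - t * (v + w) / Δ) ∧
    Δ * (v + 2 * w) / (v + w) ^ 2 > Δ / (v + w) ∧
    (1 - Δ * (v + 2 * w) / (v + w) ^ 2 * ((v + w) / (v + 2 * w)) * (w / Δ) =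
        v / (v + w) ∧
      (0:ℝ) < v / (v + w)) := by
  refine ⟨fun t ht _ => ?_, div_lt_mul_div_sq hΔ hv.le hw,
    one_sub_coordRate_mul_maxDuration hΔ.ne' (by positivity) (by positivity), by positivity⟩
  have hrate := mul_le_mul_of_nonneg_left (coordRate_le_indivRate hΔ.le hv.le hw.le) ht
  rw [← mul_assoc] at hrate
  rw [mul_div_assoc]
  linarith
end

section
/- Let Δ, v, w be positive reals and define f : ℝ → ℝ by f(y) = v·y for y ∈ [0, Δ/v] and f(y) = Δ − w·(y − Δ/v) for y ∈ (Δ/v, Δ/v + Δ/w]. Then the pushforward under f of the uniform probability measure on [0, Δ/v + Δ/w] is the uniform probability measure on [0, Δ]. -/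
/-! Each phase of the cycle is mapped affinely and bijectively onto `[0, Δ]`, with slope `v`
resp. `-w`, so it pushes Lebesgue measure forward to Lebesgue measure on `[0, Δ]` scaled by
`1/v` resp. `1/w`. The total factor `1/v + 1/w` is the cycle length divided by `Δ`, which the
normalisations cancel. -/

open MeasureTheory Set

theorem Real.map_volume_affine {b c : ℝ} (hc : c ≠ 0) :
    Measure.map (fun y => b + c * y) volume = ENNReal.ofReal |c⁻¹| • volume := by
  have hcomp : (fun y => b + c * y) = (b + ·) ∘ (c * ·) := rfl
  rw [hcomp, ← Measure.map_map (by fun_prop) (by fun_prop), Real.map_volume_mul_left hc,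
    Measure.map_smul, map_add_left_eq_self]

theorem Real.measurableEmbedding_affine {b c : ℝ} (hc : c ≠ 0) :
    MeasurableEmbedding (fun y => b + c * y) :=
  (measurableEmbedding_addLeft b).comp (measurableEmbedding_mulLeft₀ hc)

theorem Real.map_volume_restrict_of_eqOn_affine {f : ℝ → ℝ} {s t : Set ℝ} {b c : ℝ}
    (hc : c ≠ 0) (hs : MeasurableSet s) (hf : EqOn f (fun y => b + c * y) s)
    (hst : s =ᵐ[volume] (fun y => b + c * y) ⁻¹' t) :
    Measure.map f (volume.restrict s) = ENNReal.ofReal |c⁻¹| • volume.restrict t := by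
  rw [Measure.map_congr (ae_restrict_of_forall_mem hs hf), Measure.restrict_congr_set hst,
    ← (Real.measurableEmbedding_affine hc).restrict_map, Real.map_volume_affine hc,
    Measure.restrict_smul]

theorem inv_ofReal_div_add_div_mul {Δ v w : ℝ} (hΔ : 0 < Δ) (hv : 0 < v) (hw : 0 < w) :
    (ENNReal.ofReal (Δ / v + Δ / w))⁻¹ *
        (ENNReal.ofReal |v⁻¹| + ENNReal.ofReal |(-w)⁻¹|) = (ENNReal.ofReal Δ)⁻¹ := by
  have hvw : 0 < Δ / v + Δ / w := by positivity
  rw [← ENNReal.ofReal_inv_of_pos hvw, ← ENNReal.ofReal_add (abs_nonneg _) (abs_nonneg _),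
    ← ENNReal.ofReal_mul (by positivity), ← ENNReal.ofReal_inv_of_pos hΔ, abs_inv, abs_inv,
    abs_neg, abs_of_pos hv, abs_of_pos hw]
  congr 1
  field_simp

theorem stmt_18 (Δ v w : ℝ) (hΔ : 0 < Δ) (hv : 0 < v) (hw : 0 < w)
    (f : ℝ → ℝ)
    (hf : ∀ y, f y = if y ≤ Δ / v then v * y else Δ - w * (y - Δ / v)) :
    Measure.map f
        ((ENNReal.ofReal (Δ / v + Δ / w))⁻¹ •
          volume.restrict (Set.Icc (0:ℝ) (Δ / v + Δ / w))) =
      (ENNReal.ofReal Δ)⁻¹ • volume.restrict (Set.Icc (0:ℝ) Δ) := by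
  set a := Δ / v
  have ha : 0 < a := by positivity
  have hsplit : volume.restrict (Icc 0 (a + Δ / w)) =
      volume.restrict (Icc 0 a) + volume.restrict (Ioc a (a + Δ / w)) := by
    have hdisj : Disjoint (Icc 0 a) (Ioc a (a + Δ / w)) :=
      Set.disjoint_left.2 fun _ h1 h2 => h2.1.not_ge h1.2
    rw [← Measure.restrict_union hdisj measurableSet_Ioc,
      Icc_union_Ioc_eq_Icc ha.le (le_add_of_nonneg_right (by positivity))]
  have hON : Measure.map f (volume.restrict (Icc 0 a)) =
      ENNReal.ofReal |v⁻¹| • volume.restrict (Icc 0 Δ) := by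
    refine Real.map_volume_restrict_of_eqOn_affine (b := 0) hv.ne' measurableSet_Icc
      (fun y hy => by simp [hf, hy.2]) (Filter.EventuallyEq.of_eq ?_)
    simp only [zero_add]
    rw [preimage_const_mul_Icc₀ _ _ hv, zero_div]
  have hOFF : Measure.map f (volume.restrict (Ioc a (a + Δ / w))) =
      ENNReal.ofReal |(-w)⁻¹| • volume.restrict (Icc 0 Δ) := by
    refine Real.map_volume_restrict_of_eqOn_affine (b := Δ + w * a) (by simpa using hw.ne')
      measurableSet_Ioc (fun y hy => by simp [hf, not_le.mpr hy.1]; ring) (Ioc_ae_eq_Icc.trans ?_)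
    refine Filter.EventuallyEq.of_eq (ext fun y => ?_)
    simp only [mem_preimage, mem_Icc, ← sub_le_iff_le_add', le_div_iff₀ hw]
    constructor <;> rintro ⟨h1, h2⟩ <;> constructor <;> nlinarith
  have hfm : Measurable f := by
    rw [funext hf]
    exact Measurable.ite measurableSet_Iic (by fun_prop) (by fun_prop)
  rw [Measure.map_smul, hsplit, Measure.map_add _ _ hfm, hON, hOFF, ← add_smul,
    smul_smul, inv_ofReal_div_add_div_mul hΔ hv hw]
end
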